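/- arXiv:1905.02467 — 2 statements merged into one kernel-verified Lean document; each statement's English description precedes it below -/
import Mathlib

section
/- There exist constants C, c > 0 such that for all ν ≥ 1/2 and all α ∈ ℝ^+ ∪ iℝ^+, the integral I_ν(α) := ∫_0^R r |Z_ν(αr)|² dr (with Z_ν = I_ν for real α and Z_ν = J_ν for purely imaginary α, and R > 0 fixed) satisfies I_ν(α) ≥ (c / (⟨|α|⟩² ν²)) · (c·min{|α|,1}/ν)^{2ν} · e^{c·Re α}. -/
/-- Modified Bessel function of the first kind, via its power series. -/
noncomputable def besselI (ν x : ℝ) : ℝ :=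
  ∑' k : ℕ, (x / 2) ^ (ν + 2 * (k : ℝ)) / ((k.factorial : ℝ) * Real.Gamma (ν + (k : ℝ) + 1))

/-- Bessel function of the first kind, via its power series. -/
noncomputable def besselJ (ν x : ℝ) : ℝ :=
  ∑' k : ℕ, (-1 : ℝ) ^ k * (x / 2) ^ (ν + 2 * (k : ℝ)) /
    ((k.factorial : ℝ) * Real.Gamma (ν + (k : ℝ) + 1))

open Real Set MeasureTheory

lemma gamma_add_one_le {x : ℝ} (hx : 0 < x) : Real.Gamma (x + 1) ≤ 2 * x ^ x := by
  have h2x : (0:ℝ) < 2 * x := by linarith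
  have h1 : Real.Gamma (x + 1) = ∫ t in Ioi (0:ℝ), Real.exp (-t) * t ^ x := by
    rw [Real.Gamma_eq_integral (by linarith)]
    simp
  have hbound : ∀ t ∈ Ioi (0:ℝ),
      Real.exp (-t) * t ^ x ≤ (2 * x) ^ x * Real.exp (-x) * Real.exp (-(1/2) * t) := by
    intro t ht
    have ht0 : (0:ℝ) < t := ht
    have hlog : Real.log t - Real.log (2 * x) ≤ t / (2 * x) - 1 := by
      have := Real.log_le_sub_one_of_pos (show (0:ℝ) < t / (2*x) by positivity)
      rwa [Real.log_div ht0.ne' h2x.ne'] at this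
    have hexp : x * Real.log t - t ≤ x * Real.log (2*x) + (-x) + (-(1/2) * t) := by
      have h := mul_le_mul_of_nonneg_left hlog hx.le
      have hxt : x * (t / (2*x)) = t / 2 := by field_simp
      nlinarith
    calc Real.exp (-t) * t ^ x = Real.exp (x * Real.log t - t) := by
          rw [Real.rpow_def_of_pos ht0, ← Real.exp_add, mul_comm (Real.log t)]; ring_nf
      _ ≤ Real.exp (x * Real.log (2*x) + (-x) + (-(1/2) * t)) := Real.exp_le_exp.2 hexp
      _ = (2 * x) ^ x * Real.exp (-x) * Real.exp (-(1/2) * t) := by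
          rw [Real.exp_add, Real.exp_add, Real.rpow_def_of_pos h2x, mul_comm (Real.log (2*x))]
  have hint_f : IntegrableOn (fun t : ℝ => Real.exp (-t) * t ^ x) (Ioi 0) := by
    have := Real.GammaIntegral_convergent (show (0:ℝ) < x + 1 by linarith)
    simpa using this
  have hint_g : IntegrableOn
      (fun t : ℝ => (2 * x) ^ x * Real.exp (-x) * Real.exp (-(1/2) * t)) (Ioi 0) :=
    (exp_neg_integrableOn_Ioi 0 (by norm_num : (0:ℝ) < 1/2)).const_mul _
  have hmono := setIntegral_mono_on hint_f hint_g measurableSet_Ioi hbound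
  have hval : ∫ t in Ioi (0:ℝ), Real.exp (-(1/2) * t) = 2 := by
    have := Real.integral_rpow_mul_exp_neg_mul_Ioi (show (0:ℝ) < 1 by norm_num)
      (show (0:ℝ) < 1/2 by norm_num)
    simp only [sub_self, Real.rpow_zero, one_mul, Real.Gamma_one, mul_one, Real.rpow_one,
      neg_mul] at this ⊢
    rw [this]
    norm_num
  have hgval : ∫ t in Ioi (0:ℝ), (2 * x) ^ x * Real.exp (-x) * Real.exp (-(1/2) * t)
      = (2 * x) ^ x * Real.exp (-x) * 2 := by
    rw [MeasureTheory.integral_const_mul, hval]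
  have hfinal : (2 * x) ^ x * Real.exp (-x) * 2 ≤ 2 * x ^ x := by
    have hsplit : (2 * x) ^ x = 2 ^ x * x ^ x := Real.mul_rpow (by norm_num) hx.le
    have h2e : (2:ℝ) ^ x * Real.exp (-x) ≤ 1 := by
      have he : (2:ℝ) ^ x ≤ Real.exp 1 ^ x :=
        Real.rpow_le_rpow (by norm_num) (by linarith [Real.add_one_le_exp 1]) hx.le
      rw [Real.exp_one_rpow] at he
      rw [Real.exp_neg]
      calc (2:ℝ) ^ x * (Real.exp x)⁻¹ ≤ Real.exp x * (Real.exp x)⁻¹ :=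
            mul_le_mul_of_nonneg_right he (by positivity)
        _ = 1 := mul_inv_cancel₀ (Real.exp_pos x).ne'
    have hxx : (0:ℝ) ≤ x ^ x := Real.rpow_nonneg hx.le x
    nlinarith [mul_le_mul_of_nonneg_right h2e hxx, Real.exp_pos (-x)]
  rw [h1]
  calc (∫ t in Ioi (0:ℝ), Real.exp (-t) * t ^ x)
      ≤ (2 * x) ^ x * Real.exp (-x) * 2 := by rw [← hgval]; exact hmono
    _ ≤ 2 * x ^ x := hfinal

section aux
variable {ν : ℝ}

lemma gamma_prod (hν : 0 < ν) (k : ℕ) :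
    Real.Gamma (ν + k + 1) = Real.Gamma (ν + 1) * ∏ i ∈ Finset.range k, (ν + i + 1) := by
  induction k with
  | zero => simp
  | succ n ih =>
    have h1 : (ν + (n+1:ℕ) + 1 : ℝ) = (ν + n + 1) + 1 := by push_cast; ring
    rw [h1, Real.Gamma_add_one (by positivity), ih, Finset.prod_range_succ]
    push_cast; ring

lemma gamma_ge_factorial (hν : 0 < ν) (k : ℕ) :
    (k.factorial : ℝ) * Real.Gamma (ν + 1) ≤ Real.Gamma (ν + k + 1) := by
  rw [gamma_prod hν k, mul_comm]
  have hG : (0:ℝ) < Real.Gamma (ν + 1) := Real.Gamma_pos_of_pos (by linarith)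
  gcongr
  calc (k.factorial : ℝ) = ∏ i ∈ Finset.range k, ((i:ℝ) + 1) := by
        rw_mod_cast [Finset.prod_range_add_one_eq_factorial]
    _ ≤ ∏ i ∈ Finset.range k, (ν + i + 1) := by
        apply Finset.prod_le_prod (fun i _ => by positivity) (fun i _ => by linarith)

lemma gamma_ge_pow (hν : 1/2 ≤ ν) (k : ℕ) :
    (3/2 : ℝ) ^ k * Real.Gamma (ν + 1) ≤ Real.Gamma (ν + k + 1) := by
  have hν0 : 0 < ν := by linarith
  rw [gamma_prod hν0 k, mul_comm]
  have hG : (0:ℝ) < Real.Gamma (ν + 1) := Real.Gamma_pos_of_pos (by linarith)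
  gcongr
  calc (3/2 : ℝ) ^ k = ∏ _i ∈ Finset.range k, (3/2 : ℝ) := by
        rw [Finset.prod_const, Finset.card_range]
    _ ≤ ∏ i ∈ Finset.range k, (ν + i + 1) := by
        apply Finset.prod_le_prod (fun i _ => by norm_num) (fun i _ => by
          have : (0:ℝ) ≤ i := Nat.cast_nonneg i
          linarith)

lemma rpow_split (hν : 0 < ν) {x : ℝ} (hx : 0 ≤ x) (k : ℕ) :
    x ^ (ν + 2 * (k:ℝ)) = x ^ ν * (x ^ 2) ^ k := by
  rcases eq_or_lt_of_le hx with h | h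
  · rw [← h, Real.zero_rpow (by positivity), Real.zero_rpow hν.ne']
    simp
  · rw [Real.rpow_add h, show (2*(k:ℝ)) = ((2*k : ℕ) : ℝ) by push_cast; ring,
      Real.rpow_natCast, pow_mul]

lemma summable_bessel (hν : 0 < ν) {x : ℝ} (hx : 0 ≤ x) :
    Summable (fun k : ℕ =>
      (x/2) ^ (ν + 2 * (k:ℝ)) / ((k.factorial : ℝ) * Real.Gamma (ν + k + 1))) := by
  have hG : (0:ℝ) < Real.Gamma (ν + 1) := Real.Gamma_pos_of_pos (by linarith)
  have hsum : Summable (fun k : ℕ =>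
      ((x/2) ^ ν / Real.Gamma (ν + 1)) * ((x^2/4) ^ k / (k.factorial : ℝ))) :=
    (Real.summable_pow_div_factorial (x^2/4)).mul_left _
  refine Summable.of_nonneg_of_le (fun k => ?_) (fun k => ?_) hsum
  · have hG2 : (0:ℝ) < Real.Gamma (ν + k + 1) := Real.Gamma_pos_of_pos (by positivity)
    have h1 : (0:ℝ) ≤ (x/2) ^ (ν + 2 * (k:ℝ)) := Real.rpow_nonneg (by linarith) _
    have h2 : (0:ℝ) < (k.factorial : ℝ) := by exact_mod_cast k.factorial_pos
    positivity
  · 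
    have hx2 : (0:ℝ) ≤ x/2 := by linarith
    rw [rpow_split hν hx2 k]
    have hfac1 : (1:ℝ) ≤ (k.factorial : ℝ) := by exact_mod_cast Nat.one_le_iff_ne_zero.2 k.factorial_ne_zero
    have hden : (k.factorial : ℝ) * ((k.factorial : ℝ) * Real.Gamma (ν+1)) ≤
        (k.factorial : ℝ) * Real.Gamma (ν + k + 1) := by
      have := gamma_ge_factorial hν k
      have hf0 : (0:ℝ) < (k.factorial : ℝ) := by positivity
      nlinarith
    have hnum : ((x/2)^2 : ℝ) ^ k = (x^2/4) ^ k := by ring_nf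
    calc (x/2) ^ ν * ((x/2)^2) ^ k / ((k.factorial : ℝ) * Real.Gamma (ν + k + 1))
        ≤ (x/2) ^ ν * ((x/2)^2) ^ k / ((k.factorial : ℝ) * ((k.factorial : ℝ) * Real.Gamma (ν+1))) := by
          apply div_le_div_of_nonneg_left _ (by positivity) hden
          positivity
      _ = (((x/2) ^ ν / Real.Gamma (ν + 1)) * ((x^2/4) ^ k / (k.factorial : ℝ)))
            * (1/(k.factorial : ℝ)) := by
          have hGne : Real.Gamma (ν + 1) ≠ 0 := hG.ne'
          have hFne : ((k.factorial : ℝ)) ≠ 0 := by positivity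
          rw [hnum]; field_simp
      _ ≤ ((x/2) ^ ν / Real.Gamma (ν + 1)) * ((x^2/4) ^ k / (k.factorial : ℝ)) := by
          have hpos : (0:ℝ) ≤ ((x/2) ^ ν / Real.Gamma (ν + 1)) * ((x^2/4) ^ k / (k.factorial : ℝ)) := by
            have := Real.rpow_nonneg hx2 ν
            positivity
          have h11 : (1:ℝ)/(k.factorial : ℝ) ≤ 1 := by
            rw [div_le_one (by positivity)]; exact hfac1
          nlinarith
end aux



section bessel
variable {ν : ℝ}

lemma bessel_term_nonneg (hν : 0 < ν) {x : ℝ} (hx : 0 ≤ x) (k : ℕ) :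
    0 ≤ (x/2) ^ (ν + 2 * (k:ℝ)) / ((k.factorial : ℝ) * Real.Gamma (ν + k + 1)) := by
  have hk : (0:ℝ) ≤ k := Nat.cast_nonneg k
  have hG : (0:ℝ) < Real.Gamma (ν + k + 1) := Real.Gamma_pos_of_pos (by linarith)
  have h1 : (0:ℝ) ≤ (x/2) ^ (ν + 2 * (k:ℝ)) := Real.rpow_nonneg (by linarith) _
  have h2 : (0:ℝ) < (k.factorial : ℝ) := by exact_mod_cast k.factorial_pos
  positivity

lemma besselI_ge_term (hν : 0 < ν) {x : ℝ} (hx : 0 ≤ x) (k : ℕ) :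
    (x/2) ^ (ν + 2 * (k:ℝ)) / ((k.factorial : ℝ) * Real.Gamma (ν + k + 1)) ≤ besselI ν x :=
  Summable.le_tsum (summable_bessel hν hx) k (fun j _ => bessel_term_nonneg hν hx j)

lemma summable_besselJ (hν : 0 < ν) {x : ℝ} (hx : 0 ≤ x) :
    Summable (fun k : ℕ => (-1:ℝ)^k * (x/2) ^ (ν + 2*(k:ℝ)) /
      ((k.factorial : ℝ) * Real.Gamma (ν + k + 1))) := by
  apply Summable.of_abs
  have heq : (fun k : ℕ => |(-1:ℝ)^k * (x/2) ^ (ν + 2*(k:ℝ)) /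
      ((k.factorial : ℝ) * Real.Gamma (ν + k + 1))|)
      = fun k : ℕ => (x/2) ^ (ν + 2*(k:ℝ)) / ((k.factorial : ℝ) * Real.Gamma (ν + k + 1)) := by
    funext k
    have hk : (0:ℝ) ≤ k := Nat.cast_nonneg k
    have hG : (0:ℝ) < Real.Gamma (ν + k + 1) := Real.Gamma_pos_of_pos (by linarith)
    have h2 : (0:ℝ) < (k.factorial : ℝ) := by exact_mod_cast k.factorial_pos
    rw [abs_div, abs_mul, abs_pow, abs_neg, abs_one, one_pow, one_mul,
      abs_of_nonneg (Real.rpow_nonneg (by linarith) _), abs_of_nonneg (by positivity)]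
  rw [heq]
  exact summable_bessel hν hx

lemma besselJ_ge (hν : 1/2 ≤ ν) {x : ℝ} (hx : 0 < x) (hx1 : x ≤ 1) :
    1/2 * ((x/2) ^ ν / Real.Gamma (ν + 1)) ≤ besselJ ν x := by
  have hν0 : (0:ℝ) < ν := by linarith
  have hG : (0:ℝ) < Real.Gamma (ν + 1) := Real.Gamma_pos_of_pos (by linarith)
  have hsum := summable_besselJ hν0 hx.le
  set f : ℕ → ℝ := fun k => (-1:ℝ)^k * (x/2) ^ (ν + 2*(k:ℝ)) /
      ((k.factorial : ℝ) * Real.Gamma (ν + k + 1)) with hf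
  set T0 : ℝ := (x/2) ^ ν / Real.Gamma (ν + 1) with hT0
  have hT0pos : 0 < T0 := by
    have := Real.rpow_pos_of_pos (show (0:ℝ) < x/2 by linarith) ν
    positivity
  have hf0 : f 0 = T0 := by
    simp [hf, hT0]
  have habs : ∀ k : ℕ, |f (k+1)| ≤ T0 * (1/6 : ℝ)^(k+1) := by
    intro k
    have hk : (0:ℝ) ≤ (k+1 : ℕ) := Nat.cast_nonneg _
    have hG2 : (0:ℝ) < Real.Gamma (ν + (k+1 : ℕ) + 1) := Real.Gamma_pos_of_pos (by linarith)
    have h2 : (0:ℝ) < ((k+1 : ℕ).factorial : ℝ) := by exact_mod_cast (k+1).factorial_pos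
    have habs1 : |f (k+1)| = (x/2) ^ (ν + 2*((k+1 : ℕ):ℝ)) /
        (((k+1 : ℕ).factorial : ℝ) * Real.Gamma (ν + (k+1 : ℕ) + 1)) := by
      rw [hf, abs_div, abs_mul, abs_pow, abs_neg, abs_one, one_pow, one_mul,
        abs_of_nonneg (Real.rpow_nonneg (by linarith) _), abs_of_nonneg (by positivity)]
    rw [habs1, rpow_split hν0 (by linarith : (0:ℝ) ≤ x/2) (k+1)]
    have hnum : (x/2) ^ ν * ((x/2)^2) ^ (k+1) ≤ (x/2) ^ ν * (1/4 : ℝ)^(k+1) := by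
      apply mul_le_mul_of_nonneg_left _ (Real.rpow_nonneg (by linarith) ν)
      apply pow_le_pow_left₀ (by positivity)
      nlinarith
    have hden : (3/2 : ℝ)^(k+1) * Real.Gamma (ν + 1) ≤
        (((k+1 : ℕ).factorial : ℝ) * Real.Gamma (ν + (k+1 : ℕ) + 1)) := by
      have h1 := gamma_ge_pow hν (k+1)
      have hfac1 : (1:ℝ) ≤ ((k+1 : ℕ).factorial : ℝ) := by
        exact_mod_cast Nat.one_le_iff_ne_zero.2 (k+1).factorial_ne_zero
      nlinarith [Real.Gamma_pos_of_pos (show (0:ℝ) < ν + (k+1:ℕ) + 1 by linarith)]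
    calc (x/2) ^ ν * ((x/2)^2) ^ (k+1) / (((k+1 : ℕ).factorial : ℝ) * Real.Gamma (ν + (k+1 : ℕ) + 1))
        ≤ (x/2) ^ ν * (1/4 : ℝ)^(k+1) / ((3/2 : ℝ)^(k+1) * Real.Gamma (ν + 1)) :=
          div_le_div₀ (by positivity) hnum (by positivity) hden
      _ = T0 * (1/6 : ℝ)^(k+1) := by
          rw [hT0]
          rw [show ((1:ℝ)/6) = (1/4) / (3/2) by norm_num, div_pow]
          field_simp
          rw [← mul_pow, ← mul_pow]
          norm_num
  have hsum1 : Summable (fun k : ℕ => f (k+1)) := (summable_nat_add_iff 1).2 hsum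
  have hsumgeo : Summable (fun k : ℕ => T0 * (1/6 : ℝ)^(k+1)) := by
    apply Summable.mul_left
    exact ((summable_geometric_of_lt_one (by norm_num) (by norm_num)).mul_left _ : Summable fun k : ℕ => (1/6:ℝ) * (1/6:ℝ)^k).congr (fun k => by rw [pow_succ]; ring)
  have hS : |∑' k : ℕ, f (k+1)| ≤ T0 * (1/2 : ℝ) := by
    calc |∑' k : ℕ, f (k+1)| ≤ ∑' k : ℕ, |f (k+1)| := by
          simpa [Real.norm_eq_abs] using norm_tsum_le_tsum_norm (f := fun k : ℕ => f (k+1))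
            (by simpa [Real.norm_eq_abs] using hsum1.abs)
      _ ≤ ∑' k : ℕ, T0 * (1/6 : ℝ)^(k+1) := Summable.tsum_le_tsum habs hsum1.abs hsumgeo
      _ = T0 * ((1/6) * (1 - 1/6 : ℝ)⁻¹) := by
          rw [tsum_mul_left]
          congr 1
          rw [show (fun k : ℕ => (1/6:ℝ)^(k+1)) = fun k : ℕ => (1/6:ℝ) * (1/6:ℝ)^k from
            funext fun k => by rw [pow_succ]; ring]
          rw [tsum_mul_left, tsum_geometric_of_lt_one (by norm_num) (by norm_num)]
      _ ≤ T0 * (1/2 : ℝ) := by nlinarith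
  have hJ : besselJ ν x = f 0 + ∑' k : ℕ, f (k+1) := by
    rw [besselJ, ← Summable.tsum_eq_zero_add hsum]
  rw [hJ, hf0]
  have := abs_le.1 hS
  linarith
end bessel



section cont
variable {ν : ℝ}

lemma continuousOn_bessel_aux (hν : 0 < ν) (ε : ℕ → ℝ) (hε : ∀ k, |ε k| ≤ 1) {M : ℝ}
    (hM : 0 ≤ M) :
    ContinuousOn (fun x : ℝ => ∑' k : ℕ, ε k * ((x/2) ^ (ν + 2*(k:ℝ)) /
      ((k.factorial : ℝ) * Real.Gamma (ν + k + 1)))) (Icc 0 M) := by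
  apply continuousOn_tsum
    (u := fun k : ℕ => (M/2) ^ (ν + 2*(k:ℝ)) / ((k.factorial : ℝ) * Real.Gamma (ν + k + 1)))
  · intro k
    apply Continuous.continuousOn
    have hp : (0:ℝ) < ν + 2*(k:ℝ) := by positivity
    exact continuous_const.mul (((continuous_id.div_const 2).rpow_const (fun x => Or.inr hp.le)).div_const _)
  · exact summable_bessel hν (by linarith : (0:ℝ) ≤ M)
  · intro k x hx
    have hk : (0:ℝ) ≤ k := Nat.cast_nonneg k
    have hG : (0:ℝ) < Real.Gamma (ν + k + 1) := Real.Gamma_pos_of_pos (by linarith)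
    have h2 : (0:ℝ) < (k.factorial : ℝ) := by exact_mod_cast k.factorial_pos
    have ht : (0:ℝ) ≤ (x/2) ^ (ν + 2*(k:ℝ)) / ((k.factorial : ℝ) * Real.Gamma (ν + k + 1)) := by
      have := Real.rpow_nonneg (show (0:ℝ) ≤ x/2 by linarith [hx.1]) (ν + 2*(k:ℝ))
      positivity
    rw [Real.norm_eq_abs, abs_mul, abs_of_nonneg ht]
    calc |ε k| * ((x/2) ^ (ν + 2*(k:ℝ)) / ((k.factorial : ℝ) * Real.Gamma (ν + k + 1)))
        ≤ 1 * ((x/2) ^ (ν + 2*(k:ℝ)) / ((k.factorial : ℝ) * Real.Gamma (ν + k + 1))) :=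
          mul_le_mul_of_nonneg_right (hε k) ht
      _ ≤ (M/2) ^ (ν + 2*(k:ℝ)) / ((k.factorial : ℝ) * Real.Gamma (ν + k + 1)) := by
          rw [one_mul]
          apply div_le_div_of_nonneg_right _ (by positivity)
          · exact Real.rpow_le_rpow (by linarith [hx.1]) (by linarith [hx.1, hx.2]) (by positivity)

lemma continuousOn_besselI (hν : 0 < ν) {M : ℝ} (hM : 0 ≤ M) :
    ContinuousOn (besselI ν) (Icc 0 M) := by
  have := continuousOn_bessel_aux hν (fun _ => 1) (fun k => by norm_num) hM
  exact this.congr (fun x _ => by simp only [besselI, one_mul])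

lemma continuousOn_besselJ (hν : 0 < ν) {M : ℝ} (hM : 0 ≤ M) :
    ContinuousOn (besselJ ν) (Icc 0 M) := by
  have h := continuousOn_bessel_aux hν (fun k => (-1:ℝ)^k)
    (fun k => by rw [abs_pow, abs_neg, abs_one, one_pow]) hM
  have heq : besselJ ν = fun x : ℝ => ∑' k : ℕ, (-1:ℝ)^k *
      ((x/2) ^ (ν + 2*(k:ℝ)) / ((k.factorial : ℝ) * Real.Gamma (ν + k + 1))) := by
    funext x
    rw [besselJ]
    exact tsum_congr fun k => mul_div_assoc _ _ _
  rw [heq]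
  exact h
end cont

lemma integral_lower {R : ℝ} {f : ℝ → ℝ} (hR : 0 < R) (hf : ContinuousOn f (Icc 0 R))
    (h0 : ∀ r ∈ Icc (0:ℝ) R, 0 ≤ f r) {u v m : ℝ} (hu : 0 ≤ u) (huv : u ≤ v) (hv : v ≤ R)
    (hm : ∀ r ∈ Icc u v, m ≤ f r) :
    m * (v - u) ≤ ∫ r in (0:ℝ)..R, f r := by
  have hi : IntervalIntegrable f volume 0 R :=
    ContinuousOn.intervalIntegrable (by rw [uIcc_of_le hR.le]; exact hf)
  have h1 : IntervalIntegrable f volume 0 u := by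
    apply hi.mono_set
    rw [uIcc_of_le hu, uIcc_of_le hR.le]
    exact Icc_subset_Icc le_rfl (le_trans huv hv)
  have h2 : IntervalIntegrable f volume u v := by
    apply hi.mono_set
    rw [uIcc_of_le huv, uIcc_of_le hR.le]
    exact Icc_subset_Icc hu hv
  have h3 : IntervalIntegrable f volume v R := by
    apply hi.mono_set
    rw [uIcc_of_le hv, uIcc_of_le hR.le]
    exact Icc_subset_Icc (le_trans hu huv) le_rfl
  have h23 : IntervalIntegrable f volume u R := by
    apply hi.mono_set
    rw [uIcc_of_le (le_trans huv hv), uIcc_of_le hR.le]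
    exact Icc_subset_Icc hu le_rfl
  have hsplit1 : ∫ r in (0:ℝ)..R, f r = (∫ r in (0:ℝ)..u, f r) + ∫ r in u..R, f r :=
    (intervalIntegral.integral_add_adjacent_intervals h1 h23).symm
  have hsplit2 : ∫ r in u..R, f r = (∫ r in u..v, f r) + ∫ r in v..R, f r :=
    (intervalIntegral.integral_add_adjacent_intervals h2 h3).symm
  have e0 : 0 ≤ ∫ r in (0:ℝ)..u, f r :=
    intervalIntegral.integral_nonneg hu (fun r hr => h0 r ⟨hr.1, le_trans hr.2 (le_trans huv hv)⟩)
  have e2 : 0 ≤ ∫ r in v..R, f r :=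
    intervalIntegral.integral_nonneg hv
      (fun r hr => h0 r ⟨le_trans (le_trans hu huv) hr.1, hr.2⟩)
  have e1 : m * (v - u) ≤ ∫ r in u..v, f r := by
    have hmono := intervalIntegral.integral_mono_on huv intervalIntegrable_const h2 hm
    rw [intervalIntegral.integral_const, smul_eq_mul] at hmono
    linarith [hmono]
  linarith



set_option maxHeartbeats 1000000 in
lemma small_case {R ν A : ℝ} (hR : 0 < R) (hν : 1/2 ≤ ν) (hA : 0 < A) {Z : ℝ → ℝ}
    (hZc : ContinuousOn (fun r => r * Z (A*r)^2) (Icc 0 R))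
    (hZlb : ∀ y : ℝ, 0 < y → y ≤ 1 → 1/2 * ((y/2) ^ ν / Real.Gamma (ν+1)) ≤ Z y) :
    (min R 1)^2/256 / ((1+A^2)*ν^2) * (2 * ((min R 1)^2/256) * min A 1 / ν) ^ (2*ν)
      ≤ ∫ r in (0:ℝ)..R, r * Z (A*r)^2 := by
  have hν0 : (0:ℝ) < ν := by linarith
  set q : ℝ := min R 1 with hq
  have hq0 : 0 < q := lt_min hR one_pos
  have hq1 : q ≤ 1 := min_le_right _ _
  set c : ℝ := q^2/256 with hc
  have hc0 : 0 < c := by positivity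
  set μ : ℝ := min A 1 with hμ
  have hμ0 : 0 < μ := lt_min hA one_pos
  have hμ1 : μ ≤ 1 := min_le_right _ _
  set b : ℝ := min R (1/A) with hb
  have hb0 : 0 < b := lt_min hR (by positivity)
  have hbR : b ≤ R := min_le_left _ _
  have hAb1 : A * b ≤ 1 := by
    calc A * b ≤ A * (1/A) := mul_le_mul_of_nonneg_left (min_le_right _ _) hA.le
      _ = 1 := by field_simp
  have hAb0 : 0 < A * b := by positivity
  set G : ℝ := Real.Gamma (ν+1) with hG
  have hG0 : 0 < G := Real.Gamma_pos_of_pos (by linarith)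
  have hG2 : G ≤ 2 * ν ^ ν := gamma_add_one_le hν0
  set P : ℝ := (A*b/4) ^ ν with hP
  have hP0 : 0 < P := Real.rpow_pos_of_pos (by positivity) ν
  have key : ∀ r ∈ Icc (b/2) b, (b/2) * (1/2 * (P/G))^2 ≤ r * Z (A*r)^2 := by
    intro r hr
    have hr0 : b/2 ≤ r := hr.1
    have hrb : r ≤ b := hr.2
    have hy0 : 0 < A*r := by nlinarith
    have hy1 : A*r ≤ 1 := by nlinarith
    have hPmono : P ≤ (A*r/2) ^ ν := by
      apply Real.rpow_le_rpow (by positivity) (by nlinarith) hν0.le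
    have hlb : 1/2 * (P/G) ≤ Z (A*r) := by
      refine le_trans ?_ (hZlb (A*r) hy0 hy1)
      have : P / G ≤ (A*r/2) ^ ν / G := div_le_div_of_nonneg_right hPmono hG0.le
      linarith
    have hlb0 : (0:ℝ) ≤ 1/2 * (P/G) := by positivity
    have hsq : (1/2 * (P/G))^2 ≤ Z (A*r)^2 := by nlinarith
    have hrnn : (0:ℝ) ≤ r := by nlinarith
    exact mul_le_mul hr0 hsq (by positivity) hrnn
  have hint := integral_lower hR hZc (fun r hr => mul_nonneg hr.1 (sq_nonneg _))
    (by positivity : (0:ℝ) ≤ b/2) (by linarith : b/2 ≤ b) hbR key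
  refine le_trans ?_ hint
  have e1 : P^2 = (A*b/4) ^ (2*ν) := by
    rw [hP, ← Real.rpow_natCast ((A*b/4) ^ ν) 2, ← Real.rpow_mul (by positivity)]
    norm_num [mul_comm]
  have e2 : (ν^ν)^2 = ν ^ (2*ν) := by
    rw [← Real.rpow_natCast (ν ^ ν) 2, ← Real.rpow_mul hν0.le]
    norm_num [mul_comm]
  have hm_eq : (b/2) * (1/2 * (P/G))^2 * (b - b/2) = b^2 * (A*b/4) ^ (2*ν) / (16*G^2) := by
    rw [← e1]; field_simp; ring
  have claim1 : c / ((1+A^2)*ν^2) ≤ b^2/64 := by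
    have hq2b : q^2 ≤ b^2 * (1+A^2) := by
      rcases le_total R (1/A) with h | h
      · have hbe : b = R := min_eq_left h
        have hqR : q ≤ R := min_le_left _ _
        nlinarith
      · have hbe : b = 1/A := min_eq_right h
        have h1 : (1/A) * A = 1 := by field_simp
        nlinarith
    have hν2 : 1/4 ≤ ν^2 := by nlinarith
    rw [div_le_div_iff₀ (by positivity) (by norm_num)]
    have hh : q^2 * (1/4) ≤ (b^2*(1+A^2)) * ν^2 :=
      mul_le_mul hq2b hν2 (by norm_num) (by positivity)
    nlinarith
  have claim2 : (2*c*μ/ν) ^ (2*ν) ≤ ((A*b/4)/ν) ^ (2*ν) := by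
    have hbase : 2*c*μ ≤ A*b/4 := by
      have hμq : μ * q ≤ A*b := by
        rcases le_total R (1/A) with h | h
        · have hbe : b = R := min_eq_left h
          have hqR : q ≤ R := min_le_left _ _
          have hμA : μ ≤ A := min_le_left _ _
          calc μ * q ≤ A * R := mul_le_mul hμA hqR hq0.le hA.le
            _ = A * b := by rw [hbe]
        · have hbe : b = 1/A := min_eq_right h
          have h1 : A * (1/A) = 1 := by field_simp
          calc μ * q ≤ 1 * 1 := mul_le_mul hμ1 hq1 hq0.le one_pos.le
            _ = A * b := by rw [hbe, h1]; norm_num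
      nlinarith
    exact Real.rpow_le_rpow (by positivity) ((div_le_div_iff_of_pos_right hν0).2 hbase) (by positivity)
  calc c / ((1+A^2)*ν^2) * (2*c*μ/ν) ^ (2*ν)
      ≤ (b^2/64) * ((A*b/4)/ν) ^ (2*ν) :=
        mul_le_mul claim1 claim2 (Real.rpow_nonneg (by positivity) _) (by positivity)
    _ ≤ b^2 * (A*b/4) ^ (2*ν) / (16*G^2) := by
        rw [Real.div_rpow (by positivity) hν0.le]
        have hν2ν : 0 < ν ^ (2*ν) := Real.rpow_pos_of_pos hν0 _
        have hGsq : 16*G^2 ≤ 64 * ν^(2*ν) := by nlinarith [Real.rpow_pos_of_pos hν0 ν]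
        have hx : (b^2/64) * ((A*b/4) ^ (2*ν) / ν ^ (2*ν))
            = b^2 * (A*b/4) ^ (2*ν) / (64 * ν^(2*ν)) := by ring
        rw [hx]
        exact div_le_div_of_nonneg_left (by positivity) (by positivity) hGsq
    _ = (b/2) * (1/2 * (P/G))^2 * (b - b/2) := hm_eq.symm



/-- continuity of the integrand -/
lemma cont_integrand {ν A R : ℝ} (hν : 0 < ν) (hA : 0 < A) (hR : 0 < R) {Z : ℝ → ℝ}
    (hZ : ContinuousOn Z (Icc 0 (A*R))) :
    ContinuousOn (fun r : ℝ => r * Z (A*r)^2) (Icc 0 R) := by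
  have h1 : ContinuousOn (fun r : ℝ => Z (A*r)) (Icc 0 R) := by
    apply hZ.comp ((continuous_const.mul continuous_id).continuousOn)
    intro r hr
    constructor
    · simp only [Pi.mul_apply, id_eq]; nlinarith [hr.1]
    · simp only [Pi.mul_apply, id_eq]; nlinarith [hr.2]
  exact continuousOn_id.mul (h1.pow 2)

/-- exp(t) ≤ 2^(2ν) when t ≤ ν -/
lemma exp_le_two_rpow {ν t : ℝ} (hν : 0 < ν) (h : t ≤ ν) :
    Real.exp t ≤ (2:ℝ) ^ (2*ν) := by
  rw [Real.rpow_def_of_pos (by norm_num : (0:ℝ) < 2)]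
  apply Real.exp_le_exp.2
  nlinarith [Real.log_two_gt_d9]

set_option maxHeartbeats 2000000 in
/-- Uniform lower bound for `I_ν(α) = ∫_0^R r |Z_ν(αr)|² dr`, with `Z_ν = I_ν` for `α ∈ ℝ⁺`
and `Z_ν = J_ν` for `α ∈ iℝ⁺`:
`I_ν(α) ≥ (c / (⟨|α|⟩² ν²)) (c min{|α|,1}/ν)^{2ν} e^{c Re α}`, uniformly in `ν ≥ 1/2` and `α`. -/
theorem stmt11 (R : ℝ) (hR : 0 < R) :
    ∃ c > 0, ∀ ν : ℝ, 1 / 2 ≤ ν → ∀ α : ℂ,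
      ((α.im = 0 ∧ 0 < α.re) ∨ (α.re = 0 ∧ 0 < α.im)) →
      (c / ((1 + ‖α‖ ^ 2) * ν ^ 2)) *
          (c * min (‖α‖) 1 / ν) ^ (2 * ν) * Real.exp (c * α.re)
        ≤ ∫ r in (0:ℝ)..R,
            r * (if α.im = 0 then besselI ν (‖α‖ * r)
                 else besselJ ν (‖α‖ * r)) ^ 2 := by
  have hq0 : 0 < min R 1 := lt_min hR one_pos
  have hq1 : min R 1 ≤ 1 := min_le_right _ _
  have hqR : min R 1 ≤ R := min_le_left _ _
  refine ⟨min R 1 ^ 2 / 256, by positivity, ?_⟩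
  set c : ℝ := min R 1 ^ 2 / 256 with hc
  have hc0 : 0 < c := by positivity
  have hc1 : c ≤ 1/256 := by rw [hc]; nlinarith
  have hcR : c ≤ R/256 := by rw [hc]; nlinarith
  intro ν hν α hα
  have hν0 : (0:ℝ) < ν := by linarith
  set A : ℝ := ‖α‖ with hA
  have hμ0 : 0 < min A 1 → True := fun _ => trivial
  -- key general bound used in small cases
  have main_small : ∀ t : ℝ, t ≤ ν → ∀ Z : ℝ → ℝ,
      ContinuousOn (fun r => r * Z (A*r)^2) (Icc 0 R) →
      (∀ y : ℝ, 0 < y → y ≤ 1 → 1/2 * ((y/2) ^ ν / Real.Gamma (ν+1)) ≤ Z y) →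
      0 < A →
      (c / ((1 + A ^ 2) * ν ^ 2)) * (c * min A 1 / ν) ^ (2 * ν) * Real.exp t
        ≤ ∫ r in (0:ℝ)..R, r * Z (A*r)^2 := by
    intro t ht Z hZc hZlb hA0
    have hμpos : 0 < min A 1 := lt_min hA0 one_pos
    refine le_trans ?_ (small_case hR hν hA0 hZc hZlb)
    have hexp : Real.exp t ≤ (2:ℝ) ^ (2*ν) := exp_le_two_rpow hν0 ht
    have hbase : (0:ℝ) ≤ c * min A 1 / ν := by positivity
    calc (c / ((1 + A ^ 2) * ν ^ 2)) * (c * min A 1 / ν) ^ (2 * ν) * Real.exp t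
        ≤ (c / ((1 + A ^ 2) * ν ^ 2)) * (c * min A 1 / ν) ^ (2 * ν) * (2:ℝ) ^ (2*ν) := by
          apply mul_le_mul_of_nonneg_left hexp
          positivity
      _ = c / ((1 + A ^ 2) * ν ^ 2) * (2 * c * min A 1 / ν) ^ (2*ν) := by
          rw [mul_assoc, ← Real.mul_rpow hbase (by norm_num)]
          congr 2
          ring
      _ = (min R 1)^2/256 / ((1+A^2)*ν^2) * (2 * ((min R 1)^2/256) * min A 1 / ν) ^ (2*ν) := by
          rw [hc]
  rcases hα with ⟨him, hre⟩ | ⟨hre, him⟩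
  · -- real case, besselI
    have hαeq : α = (α.re : ℂ) := Complex.ext (by simp) (by simp [him])
    have hAre : A = α.re := by
      rw [hA]
      nth_rewrite 1 [hαeq]
      rw [Complex.norm_real, Real.norm_eq_abs, abs_of_pos hre]
    have hA0 : 0 < A := by rw [hAre]; exact hre
    have hif : (fun r : ℝ => r * (if α.im = 0 then besselI ν (A * r)
        else besselJ ν (A * r)) ^ 2) = fun r : ℝ => r * besselI ν (A*r) ^ 2 := by
      funext r; rw [if_pos him]
    rw [show (∫ r in (0:ℝ)..R, r * (if α.im = 0 then besselI ν (‖α‖ * r)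
          else besselJ ν (‖α‖ * r)) ^ 2)
        = ∫ r in (0:ℝ)..R, r * besselI ν (A*r) ^ 2 by rw [← hA]; rw [hif]]
    have hZc : ContinuousOn (fun r => r * besselI ν (A*r)^2) (Icc 0 R) :=
      cont_integrand hν0 hA0 hR (continuousOn_besselI hν0 (by positivity))
    have hZlb : ∀ y : ℝ, 0 < y → y ≤ 1 →
        1/2 * ((y/2) ^ ν / Real.Gamma (ν+1)) ≤ besselI ν y := by
      intro y hy0 hy1
      have hterm := besselI_ge_term hν0 hy0.le 0
      have h0 : (y/2) ^ (ν + 2 * ((0:ℕ):ℝ)) / (((0:ℕ).factorial : ℝ)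
          * Real.Gamma (ν + (0:ℕ) + 1)) = (y/2) ^ ν / Real.Gamma (ν + 1) := by
        norm_num
      rw [h0] at hterm
      have hpos : 0 ≤ (y/2) ^ ν / Real.Gamma (ν + 1) := by
        have := Real.Gamma_pos_of_pos (show (0:ℝ) < ν + 1 by linarith)
        have := Real.rpow_nonneg (show (0:ℝ) ≤ y/2 by linarith) ν
        positivity
      linarith
    rcases le_or_gt A (64/R) with hsmall | hbig
    · -- small |α|
      apply main_small (c * α.re) _ _ hZc hZlb hA0
      rw [← hAre]
      calc c * A ≤ (R/256) * (64/R) := by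
            apply mul_le_mul hcR hsmall hA0.le (by positivity)
        _ = 1/4 := by field_simp; ring
        _ ≤ ν := by linarith
    · rcases le_or_gt ν (A*R/64) with hνs | hνb
      · -- BIG case: exponential growth régime
        have hAR : (64:ℝ) ≤ A*R := by
          have : (64/R)*R = 64 := by field_simp
          nlinarith
        set k : ℕ := ⌊A*R/32⌋₊ with hk
        have hk_le : (k:ℝ) ≤ A*R/32 := Nat.floor_le (by positivity)
        have hk_ge : A*R/64 ≤ (k:ℝ) := by
          have h := Nat.sub_one_lt_floor (A*R/32)
          rw [← hk] at h
          linarith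
        have hk1 : (1:ℝ) ≤ (k:ℝ) := by linarith
        have hkν : ν ≤ (k:ℝ) := le_trans hνs hk_ge
        have hνk0 : (0:ℝ) < ν + (k:ℝ) := by positivity
        have hkpow : (0:ℝ) < (k:ℝ)^k := by positivity
        clear_value k
        have hexp3 : Real.exp 3 ≤ 32 := by
          have h1 : Real.exp 1 ≤ 2.72 := le_of_lt (lt_trans Real.exp_one_lt_d9 (by norm_num))
          have h3 : Real.exp 3 = (Real.exp 1)^(3:ℕ) := by
            rw [← Real.exp_nat_mul]; norm_num
          rw [h3]
          calc (Real.exp 1)^(3:ℕ) ≤ (2.72:ℝ)^(3:ℕ) :=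
                pow_le_pow_left₀ (Real.exp_pos 1).le h1 3
            _ ≤ 32 := by norm_num
        have key : ∀ r ∈ Icc (R/2) R,
            (R/2) * (1/2 * Real.exp (A*R/32))^2 ≤ r * besselI ν (A*r)^2 := by
          intro r hr
          have hy : A*R/2 ≤ A*r := by nlinarith [hr.1]
          have hy0 : (0:ℝ) < A*r := by nlinarith [hr.1]
          set Y2 : ℝ := A*R/4 with hY2
          have hY2pos : (0:ℝ) < Y2 := by rw [hY2]; positivity
          have hY216 : (16:ℝ) ≤ Y2 := by rw [hY2]; linarith
          clear_value Y2
          have hGpos : (0:ℝ) < Real.Gamma (ν + k + 1) :=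
            Real.Gamma_pos_of_pos (by positivity)
          have hfacpos : (0:ℝ) < (k.factorial : ℝ) := by exact_mod_cast k.factorial_pos
          have hlb : 1/2 * Real.exp (A*R/32) ≤ besselI ν (A*r) := by
            have t1 := besselI_ge_term hν0 hy0.le k
            have hmono : Y2 ^ (ν + 2*(k:ℝ)) ≤ (A*r/2) ^ (ν + 2*(k:ℝ)) :=
              Real.rpow_le_rpow hY2pos.le (by rw [hY2]; nlinarith) (by positivity)
            have hfac : (k.factorial : ℝ) ≤ (k:ℝ)^k := by exact_mod_cast Nat.factorial_le_pow k
            have hGam : Real.Gamma (ν + k + 1) ≤ 2 * (ν+(k:ℝ)) ^ (ν+(k:ℝ)) := by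
              have := gamma_add_one_le hνk0
              linarith
            have hden : (k.factorial : ℝ) * Real.Gamma (ν + k + 1)
                ≤ (k:ℝ)^k * (2 * (ν+(k:ℝ)) ^ (ν+(k:ℝ))) :=
              mul_le_mul hfac hGam hGpos.le (by positivity)
            have hdenpos : (0:ℝ) < (k:ℝ)^k * (2 * (ν+(k:ℝ)) ^ (ν+(k:ℝ))) := by
              have := Real.rpow_pos_of_pos hνk0 (ν+(k:ℝ))
              positivity
            -- core numeric estimate
            have hsplitnum : Y2 ^ (ν + 2*(k:ℝ)) = Y2^ν * (Y2^2)^k := rpow_split hν0 hY2pos.le k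
            have hsplitden : (ν+(k:ℝ)) ^ (ν+(k:ℝ)) = (ν+(k:ℝ))^ν * (ν+(k:ℝ))^(k:ℕ) := by
              rw [Real.rpow_add hνk0, Real.rpow_natCast]
            have hF1 : (1:ℝ) ≤ (Y2/(ν+(k:ℝ)))^ν := by
              apply Real.one_le_rpow _ hν0.le
              rw [one_le_div hνk0, hY2]
              nlinarith
            have hF2 : Real.exp (A*R/32) ≤ (Y2^2/((k:ℝ)*(ν+(k:ℝ))))^k := by
              have hb32 : (32:ℝ) ≤ Y2^2/((k:ℝ)*(ν+(k:ℝ))) := by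
                rw [le_div_iff₀ (by positivity), hY2]
                nlinarith
              calc Real.exp (A*R/32) ≤ Real.exp ((k:ℝ)*3) := by
                    apply Real.exp_le_exp.2; nlinarith
                _ = (Real.exp 3)^k := by rw [← Real.exp_nat_mul]
                _ ≤ (32:ℝ)^k := pow_le_pow_left₀ (Real.exp_pos 3).le hexp3 k
                _ ≤ (Y2^2/((k:ℝ)*(ν+(k:ℝ))))^k := pow_le_pow_left₀ (by norm_num) hb32 k
            have hcore : 1/2 * Real.exp (A*R/32)
                ≤ Y2 ^ (ν + 2*(k:ℝ)) / ((k:ℝ)^k * (2 * (ν+(k:ℝ)) ^ (ν+(k:ℝ)))) := by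
              have heq : Y2 ^ (ν + 2*(k:ℝ)) / ((k:ℝ)^k * (2 * (ν+(k:ℝ)) ^ (ν+(k:ℝ))))
                  = 1/2 * ((Y2/(ν+(k:ℝ)))^ν * (Y2^2/((k:ℝ)*(ν+(k:ℝ))))^k) := by
                rw [hsplitnum, hsplitden, Real.div_rpow hY2pos.le hνk0.le, div_pow, mul_pow]
                have h1 : ((ν+(k:ℝ))^ν) ≠ 0 := (Real.rpow_pos_of_pos hνk0 ν).ne'
                have h2 : ((k:ℝ)^k) ≠ 0 := hkpow.ne'
                have h3 : ((ν+(k:ℝ))^(k:ℕ)) ≠ 0 := (pow_pos hνk0 k).ne'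
                field_simp
              rw [heq]
              have hF2' : 0 ≤ Real.exp (A*R/32) := (Real.exp_pos _).le
              nlinarith [mul_le_mul hF1 hF2 hF2' (le_trans zero_le_one hF1)]
            calc 1/2 * Real.exp (A*R/32)
                ≤ Y2 ^ (ν + 2*(k:ℝ)) / ((k:ℝ)^k * (2 * (ν+(k:ℝ)) ^ (ν+(k:ℝ)))) := hcore
              _ ≤ (A*r/2) ^ (ν + 2*(k:ℝ)) / ((k.factorial : ℝ) * Real.Gamma (ν + k + 1)) :=
                  div_le_div₀ (Real.rpow_nonneg (by positivity) _) hmono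
                    (by positivity) hden
              _ ≤ besselI ν (A*r) := t1
          have hlb0 : (0:ℝ) ≤ 1/2 * Real.exp (A*R/32) := by positivity
          have hsq : (1/2 * Real.exp (A*R/32))^2 ≤ besselI ν (A*r)^2 :=
            pow_le_pow_left₀ hlb0 hlb 2
          exact mul_le_mul hr.1 hsq (by positivity) (by nlinarith [hr.1])
        have hint := integral_lower hR hZc (fun r hr => mul_nonneg hr.1 (sq_nonneg _))
          (by positivity : (0:ℝ) ≤ R/2) (by linarith : R/2 ≤ R) le_rfl key
        refine le_trans ?_ hint
        rw [← hAre]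
        have hexpsq : (Real.exp (A*R/32))^2 = Real.exp (A*R/16) := by
          rw [pow_two, ← Real.exp_add]
          ring_nf
        have hA2 : (0:ℝ) < A^2 := by positivity
        have hμ1 : min A 1 ≤ 1 := min_le_right _ _
        have hμpos : (0:ℝ) < min A 1 := lt_min hA0 one_pos
        have g1 : c / ((1+A^2)*ν^2) ≤ 4*c/A^2 := by
          rw [div_le_div_iff₀ (by positivity) hA2]
          have hν2 : (1:ℝ)/4 ≤ ν^2 := by nlinarith
          nlinarith [mul_nonneg hc0.le (sq_nonneg A),
            mul_le_mul_of_nonneg_left hν2 (by positivity : (0:ℝ) ≤ 4*c*(1+A^2))]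
        have g2 : (c * min A 1 / ν) ^ (2*ν) ≤ 4*c := by
          have s1 : (c * min A 1 / ν) ^ (2*ν) ≤ (c/ν) ^ (2*ν) := by
            apply Real.rpow_le_rpow (by positivity) _ (by positivity)
            apply div_le_div_of_nonneg_right _ hν0.le
            nlinarith
          have s2 : (c/ν) ^ (2*ν) = c ^ (2*ν) / ν ^ (2*ν) := Real.div_rpow hc0.le hν0.le (2*ν)
          have s3 : c ^ (2*ν) ≤ c := by
            have := Real.rpow_le_rpow_of_exponent_ge hc0 (by linarith : c ≤ 1)
              (by linarith : (1:ℝ) ≤ 2*ν)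
            rwa [Real.rpow_one] at this
          have s4 : (1/4 : ℝ) ≤ ν ^ (2*ν) := by
            rcases le_total ν 1 with h1 | h1
            · have := Real.rpow_le_rpow_of_exponent_ge hν0 h1
                (by linarith : 2*ν ≤ (2:ℝ))
              have h2 : ν ^ (2:ℝ) = ν^(2:ℕ) := by
                rw [← Real.rpow_natCast]; norm_num
              rw [h2] at this
              nlinarith
            · have := Real.one_le_rpow h1 (by positivity : (0:ℝ) ≤ 2*ν)
              linarith
          calc (c * min A 1 / ν) ^ (2*ν) ≤ c ^ (2*ν) / ν ^ (2*ν) := by rw [← s2]; exact s1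
            _ ≤ c / (1/4) := div_le_div₀ hc0.le s3 (by norm_num) s4
            _ = 4*c := by ring
        have g3 : Real.exp (c*A) ≤ Real.exp (A*R/16) := by
          apply Real.exp_le_exp.2
          nlinarith
        have h16 : (4*c/A^2) * (4*c) ≤ R^2/16 := by
          have hcR2 : c ≤ R^2/256 := by
            rw [hc]
            nlinarith
          have hAge : (4096:ℝ)/R^2 ≤ A^2 := by
            have h1 : (64/R)^2 ≤ A^2 := by nlinarith [div_pos (by norm_num : (0:ℝ) < 64) hR]
            have h2 : ((64:ℝ)/R)^2 = 4096/R^2 := by field_simp; ring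
            linarith [h2 ▸ h1]
          rw [div_mul_eq_mul_div, div_le_div_iff₀ hA2 (by norm_num)]
          have hRinv : (0:ℝ) < R^2 := by positivity
          have h3 : R^2 * ((4096:ℝ)/R^2) = 4096 := by field_simp
          nlinarith
        calc c / ((1 + A ^ 2) * ν ^ 2) * (c * min A 1 / ν) ^ (2 * ν) * Real.exp (c * A)
            ≤ (4*c/A^2) * (4*c) * Real.exp (A*R/16) := by
              apply mul_le_mul (mul_le_mul g1 g2 (Real.rpow_nonneg (by positivity) _)
                (by positivity)) g3 (Real.exp_pos _).le (by positivity)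
          _ ≤ R^2/16 * Real.exp (A*R/16) :=
              mul_le_mul_of_nonneg_right h16 (Real.exp_pos _).le
          _ = (R/2) * (1/2 * Real.exp (A*R/32))^2 * (R - R/2) := by
              rw [mul_pow, hexpsq]
              ring
      · -- ν large relative to A
        apply main_small (c * α.re) _ _ hZc hZlb hA0
        rw [← hAre]
        calc c * A ≤ (R/256) * A := mul_le_mul_of_nonneg_right hcR hA0.le
          _ = (A*R)/256 := by ring
          _ ≤ (64 * ν)/256 := by nlinarith
          _ ≤ ν := by linarith
  · -- imaginary case, besselJ
    have hαeq : α = (α.im : ℂ) * Complex.I := Complex.ext (by simp [hre]) (by simp)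
    have hAre : A = α.im := by
      rw [hA]
      nth_rewrite 1 [hαeq]
      rw [norm_mul, Complex.norm_I, Complex.norm_real, Real.norm_eq_abs, abs_of_pos him, mul_one]
    have hA0 : 0 < A := by rw [hAre]; exact him
    have hif : (fun r : ℝ => r * (if α.im = 0 then besselI ν (A * r)
        else besselJ ν (A * r)) ^ 2) = fun r : ℝ => r * besselJ ν (A*r) ^ 2 := by
      funext r; rw [if_neg him.ne']
    rw [show (∫ r in (0:ℝ)..R, r * (if α.im = 0 then besselI ν (‖α‖ * r)
          else besselJ ν (‖α‖ * r)) ^ 2)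
        = ∫ r in (0:ℝ)..R, r * besselJ ν (A*r) ^ 2 by rw [← hA]; rw [hif]]
    have hZc : ContinuousOn (fun r => r * besselJ ν (A*r)^2) (Icc 0 R) :=
      cont_integrand hν0 hA0 hR (continuousOn_besselJ hν0 (by positivity))
    apply main_small (c * α.re) _ _ hZc (fun y hy0 hy1 => besselJ_ge hν hy0 hy1) hA0
    rw [hre]
    simp only [mul_zero]
    linarith
end

section
/- For ν ≥ 1/2 and 0 < α ≤ 1 with ν large, the integral ∫_0^R r |I_ν(αr)|² dr is bounded below by (1/C) (Cα)^{2ν} / ν^{2ν+2} for a constant C depending only on R, where I_ν is the modified Bessel function of the first kind. -/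
namespace BesselAux

noncomputable def term (ν x : ℝ) (k : ℕ) : ℝ :=
  (x / 2) ^ (ν + 2 * (k : ℝ)) / ((k.factorial : ℝ) * Real.Gamma (ν + (k : ℝ) + 1))

lemma besselI_eq (ν x : ℝ) : besselI ν x = ∑' k, term ν x k := rfl

lemma gamma_arg_pos {ν : ℝ} (hν : 1/2 ≤ ν) (k : ℕ) : 0 < ν + (k : ℝ) + 1 := by
  have : (0:ℝ) ≤ k := Nat.cast_nonneg k
  linarith

lemma denom_pos {ν : ℝ} (hν : 1/2 ≤ ν) (k : ℕ) :
    0 < (k.factorial : ℝ) * Real.Gamma (ν + (k : ℝ) + 1) := by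
  have h1 : (0:ℝ) < k.factorial := by exact_mod_cast k.factorial_pos
  exact mul_pos h1 (Real.Gamma_pos_of_pos (gamma_arg_pos hν k))

lemma gamma_le {ν : ℝ} (hν : 1/2 ≤ ν) (k : ℕ) :
    Real.Gamma (ν + 1) ≤ Real.Gamma (ν + (k : ℝ) + 1) := by
  induction k with
  | zero => simp
  | succ n ih =>
    have h1 : (0:ℝ) < ν + (n:ℝ) + 1 := gamma_arg_pos hν n
    have h2 : Real.Gamma (ν + ((n+1 : ℕ) : ℝ) + 1) = (ν + n + 1) * Real.Gamma (ν + (n:ℝ) + 1) := by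
      push_cast
      rw [show ν + ((n:ℝ) + 1) + 1 = (ν + (n:ℝ) + 1) + 1 by ring, Real.Gamma_add_one h1.ne']
    rw [h2]
    have h3 : 0 < Real.Gamma (ν + (n:ℝ) + 1) := Real.Gamma_pos_of_pos h1
    nlinarith [Nat.cast_nonneg (α := ℝ) n]

lemma rpow_split {t ν : ℝ} (ht : 0 ≤ t) (hν : 0 < ν) (k : ℕ) :
    t ^ (ν + 2 * (k : ℝ)) = t ^ ν * (t ^ 2) ^ k := by
  rcases ht.eq_or_lt with h | h
  · have he : (0:ℝ) < ν + 2 * (k:ℝ) := by positivity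
    rw [← h, Real.zero_rpow he.ne', Real.zero_rpow hν.ne', zero_mul]
  · have h2 : ν + 2 * (k:ℝ) = ν + ((2 * k : ℕ) : ℝ) := by push_cast; ring
    rw [h2, Real.rpow_add h, Real.rpow_natCast, pow_mul]

lemma summable_term {ν : ℝ} (hν : 1/2 ≤ ν) (x : ℝ) : Summable (term ν x) := by
  have hν0 : (0:ℝ) < ν := by linarith
  have hΓ1 : 0 < Real.Gamma (ν + 1) := Real.Gamma_pos_of_pos (by linarith)
  apply Summable.of_abs
  refine Summable.of_nonneg_of_le (fun k => abs_nonneg _) (fun k => ?_)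
    ((Real.summable_pow_div_factorial ((|x|/2)^2)).mul_left ((|x|/2) ^ ν / Real.Gamma (ν+1)))
  have hd := denom_pos hν k
  have hfac : (0:ℝ) < k.factorial := by exact_mod_cast k.factorial_pos
  have habs : |x/2| = |x|/2 := by rw [abs_div]; norm_num
  calc |term ν x k| = |(x/2) ^ (ν + 2*(k:ℝ))| / ((k.factorial : ℝ) * Real.Gamma (ν + k + 1)) := by
        rw [term, abs_div, abs_of_pos hd]
    _ ≤ |x/2| ^ (ν + 2*(k:ℝ)) / ((k.factorial : ℝ) * Real.Gamma (ν + k + 1)) := by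
        gcongr
        exact Real.abs_rpow_le_abs_rpow _ _
    _ ≤ |x/2| ^ (ν + 2*(k:ℝ)) / ((k.factorial : ℝ) * Real.Gamma (ν + 1)) := by
        have h := gamma_le hν k
        gcongr
    _ = (|x|/2) ^ ν / Real.Gamma (ν+1) * ((|x|/2)^2) ^ k / (k.factorial : ℝ) := by
        rw [rpow_split (abs_nonneg _) hν0 k, habs]; ring
    _ = (|x|/2) ^ ν / Real.Gamma (ν+1) * (((|x|/2)^2) ^ k / (k.factorial : ℝ)) := by ring

lemma term_nonneg {ν : ℝ} (hν : 1/2 ≤ ν) {x : ℝ} (hx : 0 ≤ x) (k : ℕ) : 0 ≤ term ν x k :=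
  div_nonneg (Real.rpow_nonneg (by linarith) _) (denom_pos hν k).le

lemma besselI_nonneg {ν : ℝ} (hν : 1/2 ≤ ν) {x : ℝ} (hx : 0 ≤ x) : 0 ≤ besselI ν x := by
  rw [besselI_eq]; exact tsum_nonneg (term_nonneg hν hx)

lemma besselI_ge_first {ν : ℝ} (hν : 1/2 ≤ ν) {x : ℝ} (hx : 0 < x) :
    (x/2) ^ ν / Real.Gamma (ν + 1) ≤ besselI ν x := by
  have h := Summable.le_tsum (summable_term hν x) 0 (fun j _ => term_nonneg hν hx.le j)
  rw [besselI_eq]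
  refine le_trans (le_of_eq ?_) h
  simp [term]

lemma besselI_mono {ν : ℝ} (hν : 1/2 ≤ ν) {x y : ℝ} (hx : 0 ≤ x) (hxy : x ≤ y) :
    besselI ν x ≤ besselI ν y := by
  rw [besselI_eq, besselI_eq]
  refine Summable.tsum_le_tsum (fun k => ?_) (summable_term hν x) (summable_term hν y)
  have hd := denom_pos hν k
  unfold term
  have h2 : x / 2 ≤ y / 2 := by linarith
  have h0 : (0:ℝ) ≤ x / 2 := by linarith
  gcongr

end BesselAux

open BesselAux in
lemma measurable_besselI_comp {ν : ℝ} (hν : 1/2 ≤ ν) (α : ℝ) :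
    Measurable (fun r : ℝ => besselI ν (α * r)) := by
  have hν0 : (0:ℝ) < ν := by linarith
  have hcont : ∀ k : ℕ, Continuous (fun r : ℝ => term ν (α * r) k) := by
    intro k
    have hexp : (0:ℝ) < ν + 2 * (k:ℝ) := by positivity
    have h1 : Continuous fun y : ℝ => y ^ (ν + 2 * (k:ℝ)) :=
      continuous_iff_continuousAt.2 fun y => Real.continuousAt_rpow_const _ _ (Or.inr hexp.le)
    exact ((h1.comp (by continuity : Continuous fun r : ℝ => α * r / 2)).div_const _)
  apply measurable_of_tendsto_metrizable
    (f := fun n (r : ℝ) => ∑ k ∈ Finset.range n, term ν (α * r) k)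
    (fun n => Finset.measurable_sum (Finset.range n) (fun k _ => (hcont k).measurable))
  · rw [tendsto_pi_nhds]
    intro r
    exact (summable_term hν (α * r)).hasSum.tendsto_sum_nat

open BesselAux MeasureTheory in
lemma besselI_intervalIntegrable {ν R α : ℝ} (hν : 1/2 ≤ ν) (hR : 0 < R) (hα : 0 < α)
    (hα1 : α ≤ 1) :
    IntervalIntegrable (fun r : ℝ => r * (besselI ν (α * r)) ^ 2) volume 0 R := by
  have meas : Measurable (fun r : ℝ => r * (besselI ν (α * r)) ^ 2) :=
    measurable_id.mul ((measurable_besselI_comp hν α).pow_const 2)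
  rw [intervalIntegrable_iff_integrableOn_Ioc_of_le hR.le]
  apply Integrable.mono' (integrable_const (R * (besselI ν R) ^ 2))
    meas.aestronglyMeasurable
  rw [ae_restrict_iff' measurableSet_Ioc]
  filter_upwards with r hr
  have hr0 : 0 < r := hr.1
  have h1 : 0 ≤ besselI ν (α * r) := besselI_nonneg hν (by positivity)
  have h2 : besselI ν (α * r) ≤ besselI ν R := by
    have hrR : r ≤ R := hr.2
    apply besselI_mono hν (by positivity)
    nlinarith
  have hrR : r ≤ R := hr.2
  rw [Real.norm_eq_abs, abs_of_nonneg (by positivity)]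
  have h3 : besselI ν (α * r) ^ 2 ≤ besselI ν R ^ 2 := by nlinarith
  nlinarith [sq_nonneg (besselI ν (α * r))]

lemma sq_rpow {x : ℝ} (hx : 0 < x) (a : ℝ) : (x ^ a) ^ 2 = x ^ (2 * a) := by
  rw [sq, ← Real.rpow_add hx]; ring_nf

lemma gamma_upper {ν : ℝ} (hν : 1 ≤ ν) :
    Real.Gamma (ν + 1) ≤ (2:ℝ) ^ (ν + 1) * ν ^ (ν + 1) := by
  set n := Nat.ceil ν with hn
  have h1 : ν ≤ n := Nat.le_ceil ν
  have h2 : (n:ℝ) ≤ ν + 1 := (Nat.ceil_lt_add_one (by linarith)).le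
  have hΓ : Real.Gamma (ν + 1) ≤ Real.Gamma ((n:ℝ) + 1) := by
    rcases eq_or_lt_of_le h1 with h | h
    · rw [h]
    · exact (Real.Gamma_strictMonoOn_Ici (by simp; linarith) (by simp; linarith)
        (by linarith)).le
  calc Real.Gamma (ν + 1) ≤ (n.factorial : ℝ) := by
        rw [← Real.Gamma_nat_eq_factorial n]; exact hΓ
    _ ≤ (n:ℝ) ^ n := by exact_mod_cast Nat.factorial_le_pow n
    _ ≤ (ν + 1) ^ n := by
        apply pow_le_pow_left₀ (Nat.cast_nonneg n) h2
    _ = (ν + 1) ^ ((n : ℕ) : ℝ) := (Real.rpow_natCast _ n).symm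
    _ ≤ (ν + 1) ^ (ν + 1) := Real.rpow_le_rpow_of_exponent_le (by linarith) h2
    _ ≤ (2 * ν) ^ (ν + 1) := Real.rpow_le_rpow (by linarith) (by linarith) (by linarith)
    _ = (2:ℝ) ^ (ν + 1) * ν ^ (ν + 1) := Real.mul_rpow (by norm_num) (by linarith)

open BesselAux MeasureTheory Filter

/-- For `ν ≥ 1/2` large and `0 < α ≤ 1`, one has
`∫_0^R r |I_ν(αr)|² dr ≥ C⁻¹ (Cα)^{2ν} / ν^{2ν+2}` with `C` depending only on `R`. -/
theorem stmt12 (R : ℝ) (hR : 0 < R) :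
    ∃ C > 0, ∃ ν₀ : ℝ, ∀ ν : ℝ, 1 / 2 ≤ ν → ν₀ ≤ ν → ∀ α : ℝ, 0 < α → α ≤ 1 →
      (1 / C) * (C * α) ^ (2 * ν) / ν ^ (2 * ν + 2)
        ≤ ∫ r in (0:ℝ)..R, r * (besselI ν (α * r)) ^ 2 := by
  set C : ℝ := min (R / 8) 1 with hCdef
  have hC : 0 < C := lt_min (by positivity) one_pos
  have hCR8 : C ≤ R / 8 := min_le_left _ _
  -- eventual smallness of 4(2ν+2)(1/2)^(2ν)
  have ht : Tendsto (fun ν : ℝ => 16 * (ν ^ (1:ℝ) * Real.exp (-(Real.log 4) * ν)))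
      atTop (nhds 0) := by
    have h := (tendsto_rpow_mul_exp_neg_mul_atTop_nhds_zero 1 (Real.log 4)
      (Real.log_pos (by norm_num))).const_mul (16:ℝ)
    simpa using h
  have hfle : ∀ᶠ ν : ℝ in atTop,
      4*(2*ν+2)*(1/2:ℝ)^(2*ν) ≤ 16 * (ν ^ (1:ℝ) * Real.exp (-(Real.log 4) * ν)) := by
    filter_upwards [eventually_ge_atTop (1:ℝ)] with ν hν
    have hQ : (1/2:ℝ)^(2*ν) = Real.exp (-(Real.log 4) * ν) := by
      rw [Real.rpow_def_of_pos (by norm_num)]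
      congr 1
      have hl : Real.log (1/2) = -Real.log 2 := by rw [one_div, Real.log_inv]
      have h4 : Real.log 4 = 2 * Real.log 2 := by
        rw [show (4:ℝ) = 2^2 by norm_num, Real.log_pow]; push_cast; ring
      rw [hl, h4]; ring
    rw [hQ, Real.rpow_one]
    have hE : 0 < Real.exp (-(Real.log 4) * ν) := Real.exp_pos _
    nlinarith
  have hev : ∀ᶠ ν : ℝ in atTop,
      (4*(2*ν+2)*(1/2:ℝ)^(2*ν) ≤ C * R^2 ∧ 1 ≤ ν) := by
    have hlt := ht.eventually (gt_mem_nhds (show (0:ℝ) < C * R^2 by positivity))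
    filter_upwards [hlt, hfle, eventually_ge_atTop (1:ℝ)] with ν h1 h2 h3
    exact ⟨by linarith, h3⟩
  obtain ⟨ν₁, hν₁⟩ := eventually_atTop.mp hev
  refine ⟨C, hC, ν₁, fun ν hhalf hge α hα hα1 => ?_⟩
  obtain ⟨hbound, hν1⟩ := hν₁ ν hge
  have hν0 : (0:ℝ) < ν := by linarith
  set G := Real.Gamma (ν + 1) with hGdef
  have hG : 0 < G := Real.Gamma_pos_of_pos (by linarith)
  set β := 2 * ν with hβdef
  have hβ : 0 < β := by positivity
  set Q : ℝ := (1/2:ℝ) ^ β with hQdef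
  set P : ℝ := R ^ β with hPdef
  set D : ℝ := (2:ℝ) ^ (β + 2) with hDdef
  set N : ℝ := ν ^ (β + 2) with hNdef
  have hQ0 : 0 < Q := Real.rpow_pos_of_pos (by norm_num) _
  have hP0 : 0 < P := Real.rpow_pos_of_pos hR _
  have hN0 : 0 < N := Real.rpow_pos_of_pos hν0 _
  have hD0 : 0 < D := Real.rpow_pos_of_pos (by norm_num) _
  have hA0 : 0 < α ^ β := Real.rpow_pos_of_pos hα _
  have h2r : ∀ x : ℝ, 0 < x → x ^ (2:ℝ) = x ^ 2 := by
    intro x hx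
    rw [show (2:ℝ) = ((2:ℕ):ℝ) by norm_num, Real.rpow_natCast]
  -- (i) Gamma bound
  have hG2 : G ^ 2 ≤ D * N := by
    have h := gamma_upper hν1
    have hsq : G ^ 2 ≤ ((2:ℝ) ^ (ν+1) * ν ^ (ν+1)) ^ 2 := by
      have h2 : 0 ≤ (2:ℝ) ^ (ν+1) * ν ^ (ν+1) := by positivity
      nlinarith
    calc G ^ 2 ≤ ((2:ℝ) ^ (ν+1)) ^ 2 * (ν ^ (ν+1)) ^ 2 := by rw [← mul_pow]; exact hsq
      _ = D * N := by
        rw [sq_rpow (by norm_num) (ν+1), sq_rpow hν0 (ν+1), hDdef, hNdef, hβdef]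
        ring_nf
  -- (ii) constant bound
  have hD4 : D = 4 * (2:ℝ) ^ β := by
    rw [hDdef, Real.rpow_add (by norm_num), h2r 2 (by norm_num)]; ring
  have hmerge : (R/8:ℝ) ^ β * (2:ℝ) ^ β = Q * (Q * P) := by
    rw [hQdef, hPdef, ← Real.mul_rpow (by positivity) (by positivity),
      ← Real.mul_rpow (by positivity) (by positivity),
      ← Real.mul_rpow (by positivity) (by positivity)]
    congr 1
    ring
  have hii : C ^ β * (D * (2*ν+2)) ≤ C * R^2 * (Q * P) := by
    have h1 : C ^ β ≤ (R/8) ^ β := Real.rpow_le_rpow hC.le hCR8 hβ.le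
    calc C ^ β * (D * (2*ν+2)) ≤ (R/8) ^ β * (D * (2*ν+2)) := by
          have h2 : (0:ℝ) ≤ D * (2*ν+2) := by positivity
          exact mul_le_mul_of_nonneg_right h1 h2
      _ = (4*(2*ν+2)*Q) * (Q * P) := by rw [hD4]; linear_combination (4*(2*ν+2)) * hmerge
      _ ≤ (C * R^2) * (Q * P) := by
          have h3 : (0:ℝ) ≤ Q * P := by positivity
          exact mul_le_mul_of_nonneg_right hbound h3
  -- pointwise lower bound and integral comparison
  have hΓne : G ≠ 0 := hG.ne'
  set c : ℝ := (α/2) ^ β / G ^ 2 with hcdef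
  have hc0 : 0 < c := by positivity
  have key : ∀ r ∈ Set.Icc (0:ℝ) R, c * r ^ (β + 1) ≤ r * (besselI ν (α * r)) ^ 2 := by
    intro r hr
    rcases eq_or_lt_of_le hr.1 with h | h
    · rw [← h, Real.zero_rpow (by positivity), mul_zero, zero_mul]
    · have hb := besselI_ge_first hhalf (show 0 < α * r by positivity)
      have hbn : (0:ℝ) ≤ (α*r/2) ^ ν / G := by positivity
      have hsq : ((α*r/2) ^ ν / G) ^ 2 ≤ (besselI ν (α * r)) ^ 2 := by nlinarith
      have heq : c * r ^ (β + 1) = r * ((α*r/2) ^ ν / G) ^ 2 := by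
        rw [div_pow, sq_rpow (by positivity) ν, ← hβdef,
          show α*r/2 = (α/2) * r by ring, Real.mul_rpow (by positivity) h.le,
          Real.rpow_add h, Real.rpow_one, hcdef]
        field_simp
      calc c * r ^ (β + 1) = r * ((α*r/2) ^ ν / G) ^ 2 := heq
        _ ≤ r * (besselI ν (α * r)) ^ 2 := by
            exact mul_le_mul_of_nonneg_left hsq h.le
  have hint1 : IntervalIntegrable (fun r : ℝ => c * r ^ (β+1)) volume 0 R :=
    (intervalIntegral.intervalIntegrable_rpow (Or.inl (by positivity))).const_mul c
  have hint2 := besselI_intervalIntegrable hhalf hR hα hα1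
  have hmono := intervalIntegral.integral_mono_on hR.le hint1 hint2 key
  have hcomp : (∫ r in (0:ℝ)..R, c * r ^ (β+1)) = c * (P * R^2 / (2*ν+2)) := by
    rw [intervalIntegral.integral_const_mul, integral_rpow (Or.inl (by linarith))]
    rw [Real.zero_rpow (by positivity), hPdef,
      show β + 1 + 1 = β + 2 by ring, Real.rpow_add hR, h2r R hR]
    field_simp
    rw [hβdef]; ring
  rw [hcomp] at hmono
  refine le_trans ?_ hmono
  -- final arithmetic
  have eC : (C * α) ^ β = C ^ β * α ^ β := Real.mul_rpow hC.le hα.le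
  have eα : (α/2) ^ β = α ^ β * Q := by
    rw [hQdef, ← Real.mul_rpow hα.le (by norm_num)]
    congr 1
    ring
  rw [eC, hcdef, eα]
  have hCβ : 0 < C ^ β := Real.rpow_pos_of_pos hC _
  rw [show (1/C) * (C ^ β * α ^ β) / N = (C ^ β * α ^ β) / (C * N) by
      field_simp,
    show α ^ β * Q / G ^ 2 * (P * R ^ 2 / (2*ν+2)) = (α ^ β * Q * (P * R^2)) / (G^2 * (2*ν+2)) by
      rw [div_mul_div_comm],
    div_le_div_iff₀ (by positivity) (by positivity)]
  calc C ^ β * α ^ β * (G ^ 2 * (2*ν+2)) ≤ C ^ β * α ^ β * ((D * N) * (2*ν+2)) := by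
        have : (0:ℝ) ≤ C ^ β * α ^ β := by positivity
        have h2 : G ^ 2 * (2*ν+2) ≤ (D * N) * (2*ν+2) :=
          mul_le_mul_of_nonneg_right hG2 (by linarith)
        exact mul_le_mul_of_nonneg_left h2 this
    _ = (α ^ β * N) * (C ^ β * (D * (2*ν+2))) := by ring
    _ ≤ (α ^ β * N) * (C * R^2 * (Q * P)) := by
        exact mul_le_mul_of_nonneg_left hii (by positivity)
    _ = α ^ β * Q * (P * R^2) * (C * N) := by ring
end
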